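/- arXiv:1905.10612 — 3 statements merged into one kernel-verified Lean document; each statement's English description precedes it below -/
import Mathlib

section
/- (Stone's Representation Theorem) If R is a Boolean ring, then the map R → Clop(Spec R), f ↦ D(f) = {p ∈ Spec R : f ∉ p}, is a ring isomorphism. -/
open PrimeSpectrum

lemma boolRing_basicOpen_add {R : Type*} [BooleanRing R] (f g : R) :
    (basicOpen (f + g) : Set (PrimeSpectrum R)) =
      ((basicOpen f : Set (PrimeSpectrum R)) ∪ basicOpen g) \
        ((basicOpen f : Set (PrimeSpectrum R)) ∩ basicOpen g) := by
  ext p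
  simp only [SetLike.mem_coe, mem_basicOpen, Set.mem_diff, Set.mem_union, Set.mem_inter_iff]
  by_cases hf : f ∈ p.asIdeal <;> by_cases hg : g ∈ p.asIdeal
  · have h : f + g ∈ p.asIdeal := add_mem hf hg
    tauto
  · have h : f + g ∉ p.asIdeal := fun h => hg (by
      have hge : g = f + (f + g) := by
        rw [← add_assoc, BooleanRing.add_self, zero_add]
      rw [hge]; exact add_mem hf h)
    tauto
  · have h : f + g ∉ p.asIdeal := fun h => hf (by
      have hfe : f = (f + g) + g := by
        rw [add_assoc, BooleanRing.add_self, add_zero]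
      rw [hfe]; exact add_mem h hg)
    tauto
  · have hfg : f * g ∉ p.asIdeal := fun h => (p.isPrime.mem_or_mem h).elim hf hg
    have h0 : f * g * (f + g) = 0 := by
      rw [mul_add, mul_right_comm, BooleanRing.mul_self, mul_assoc, BooleanRing.mul_self,
        BooleanRing.add_self]
    have h : f + g ∈ p.asIdeal := by
      rcases p.isPrime.mem_or_mem (show f * g * (f + g) ∈ p.asIdeal by rw [h0]; exact zero_mem _)
        with h | h
      · exact absurd h hfg
      · exact h
    tauto


noncomputable def boolRingClopensEquiv (R : Type*) [BooleanRing R] :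
    R ≃ {s : Set (PrimeSpectrum R) // IsClopen s} :=
  Equiv.ofBijective
    (fun f => ⟨(basicOpen f : Set (PrimeSpectrum R)),
      PrimeSpectrum.isClopen_iff.mpr ⟨f, BooleanRing.mul_self f, rfl⟩⟩)
    ⟨fun x y h => basicOpen_injOn_isIdempotentElem (BooleanRing.mul_self x)
        (BooleanRing.mul_self y) (SetLike.ext' (congrArg Subtype.val h)),
      fun s => by
        obtain ⟨e, _, he⟩ := PrimeSpectrum.isClopen_iff.mp s.2
        exact ⟨e, Subtype.ext (by rw [he])⟩⟩

lemma boolRingClopensEquiv_apply (R : Type*) [BooleanRing R] (f : R) :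
    (boolRingClopensEquiv R f : Set (PrimeSpectrum R)) = (basicOpen f : Set (PrimeSpectrum R)) :=
  rfl

/-- Stone's Representation Theorem: if `R` is a Boolean ring, then the map
`R → Clop(Spec R)`, `f ↦ D(f) = {p | f ∉ p}`, is a ring isomorphism, where
`Clop(Spec R)` is the ring of clopen subsets of `Spec R` under symmetric difference
and intersection. -/
theorem stmt_5 (R : Type*) [BooleanRing R] :
    ∃ _instC : CommRing {s : Set (PrimeSpectrum R) // IsClopen s},
      (∀ s t : {s : Set (PrimeSpectrum R) // IsClopen s},
        ((s + t : {s : Set (PrimeSpectrum R) // IsClopen s}) : Set (PrimeSpectrum R)) =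
          ((s : Set (PrimeSpectrum R)) ∪ t) \ ((s : Set (PrimeSpectrum R)) ∩ t)) ∧
      (∀ s t : {s : Set (PrimeSpectrum R) // IsClopen s},
        ((s * t : {s : Set (PrimeSpectrum R) // IsClopen s}) : Set (PrimeSpectrum R)) =
          (s : Set (PrimeSpectrum R)) ∩ t) ∧
      ∃ φ : R ≃+* {s : Set (PrimeSpectrum R) // IsClopen s},
        ∀ f : R, (φ f : Set (PrimeSpectrum R)) = {p : PrimeSpectrum R | f ∉ p.asIdeal} := by
  set E := boolRingClopensEquiv R with hEdef
  have hE := boolRingClopensEquiv_apply R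
  letI instC : CommRing {s : Set (PrimeSpectrum R) // IsClopen s} := E.symm.commRing
  refine ⟨instC, ?_, ?_, ?_⟩
  · intro s t
    have hadd : s + t = E (E.symm s + E.symm t) := rfl
    rw [hadd, hE, boolRing_basicOpen_add]
    conv_rhs => rw [(E.apply_symm_apply s).symm, (E.apply_symm_apply t).symm, hE, hE]
  · intro s t
    have hmul : s * t = E (E.symm s * E.symm t) := rfl
    rw [hmul, hE]
    conv_rhs => rw [(E.apply_symm_apply s).symm, (E.apply_symm_apply t).symm, hE, hE]
    exact congrArg SetLike.coe (basicOpen_mul _ _)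
  · refine ⟨(E.symm.ringEquiv).symm, fun f => ?_⟩
    have h1 : ((E.symm.ringEquiv).symm f : {s : Set (PrimeSpectrum R) // IsClopen s}) = E f := rfl
    rw [h1, hE]
    ext p
    simp [mem_basicOpen]
end

section
/- If Y is a finite set and φ : P(Y) → P(X) is a ring homomorphism, then there exists a unique function f : X → Y such that φ(A) = f⁻¹(A) for all A ⊆ Y. -/
/-- The power set ring: `Set X` with symmetric difference as addition and
intersection as multiplication. -/
instance powerSetRing (X : Type*) : BooleanRing (Set X) :=
  inferInstanceAs (BooleanRing (AsBoolRing (Set X)))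

/-- If `Y` is a finite set and `φ : P(Y) → P(X)` is a ring homomorphism, then there
is a unique function `f : X → Y` with `φ(A) = f⁻¹(A)` for all `A ⊆ Y`. -/
theorem stmt_18 {X Y : Type*} [Finite Y] (φ : Set Y →+* Set X) :
    ∃! f : X → Y, ∀ A : Set Y, φ A = f ⁻¹' A := by
  have := Fintype.ofFinite Y
  have hmul : ∀ A B : Set Y, φ (A ∩ B) = φ A ∩ φ B := fun A B => map_mul φ A B
  have hadd : ∀ A B : Set Y, φ (symmDiff A B) = symmDiff (φ A) (φ B) :=
    fun A B => map_add φ A B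
  have hone : φ Set.univ = Set.univ := map_one φ
  have hzero : φ ∅ = ∅ := map_zero φ
  have keyY : ∀ (A B : Set Y), A ∪ B = symmDiff (symmDiff A B) (A ∩ B) := by
    intro A B
    ext x
    simp [Set.symmDiff_def]
    tauto
  have keyX : ∀ (A B : Set X), A ∪ B = symmDiff (symmDiff A B) (A ∩ B) := by
    intro A B
    ext x
    simp [Set.symmDiff_def]
    tauto
  have hsup : ∀ A B : Set Y, φ (A ∪ B) = φ A ∪ φ B := by
    intro A B
    rw [keyY A B, hadd, hadd, hmul, ← keyX (φ A) (φ B)]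
  have hfs : ∀ s : Finset Y, φ ↑s = ⋃ y ∈ s, φ {y} := by
    intro s
    classical
    induction s using Finset.induction_on with
    | empty => simpa using hzero
    | insert _ _ hx ih =>
        rename_i a s
        rw [Finset.coe_insert, Set.insert_eq, hsup, ih]
        simp [Set.insert_eq]
  have hmono : ∀ A B : Set Y, A ⊆ B → φ A ⊆ φ B := by
    intro A B hAB
    have : A ∩ B = A := Set.inter_eq_left.mpr hAB
    rw [← this, hmul]
    exact Set.inter_subset_right
  have huniq : ∀ x : X, ∃! y : Y, x ∈ φ {y} := by
    intro x
    have hx : x ∈ φ Set.univ := by rw [hone]; trivial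
    rw [show (Set.univ : Set Y) = ↑(Finset.univ : Finset Y) by simp, hfs] at hx
    simp only [Set.mem_iUnion, Finset.mem_univ, exists_true_left] at hx
    obtain ⟨y, hy⟩ := hx
    refine ⟨y, hy, fun z hz => ?_⟩
    by_contra hne
    have : ({z} : Set Y) ∩ {y} = ∅ := by
      ext w; simp only [Set.mem_inter_iff, Set.mem_singleton_iff, Set.mem_empty_iff_false,
        iff_false]
      rintro ⟨rfl, rfl⟩; exact hne rfl
    have h2 := hmul {z} {y}
    rw [this, hzero] at h2
    exact absurd (h2 ▸ ⟨hz, hy⟩ : x ∈ (∅ : Set X)) (by simp)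
  choose f hf hu using huniq
  refine ⟨f, fun A => ?_, fun g hg => ?_⟩
  · ext x
    simp only [Set.mem_preimage]
    constructor
    · intro hx
      by_contra hfx
      have : A ∩ {f x} = ∅ := by
        ext z; simp only [Set.mem_inter_iff, Set.mem_singleton_iff, Set.mem_empty_iff_false,
          iff_false]
        rintro ⟨hz, rfl⟩; exact hfx hz
      have h2 := hmul A {f x}
      rw [this, hzero] at h2
      exact absurd (h2 ▸ ⟨hx, hf x⟩ : x ∈ (∅ : Set X)) (by simp)
    · intro hx
      exact hmono {f x} A (Set.singleton_subset_iff.mpr hx) (hf x)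
  · funext x
    refine hu x (g x) ?_
    show x ∈ φ {g x}
    rw [hg]
    exact rfl
end

section
/- Let X be an infinite set and S the subring of P(X) consisting of subsets that are finite or cofinite. Then the maximal ideals of S are exactly Fin(X) and the ideals m_x ∩ S = {A ∈ S : x ∉ A} for x ∈ X. -/
open Set

section Aux

variable {X : Type*}

lemma ps_mul (A B : Set X) : A * B = A ∩ B := rfl
lemma ps_add (A B : Set X) : A + B = symmDiff A B := rfl
lemma ps_one : (1 : Set X) = Set.univ := rfl
lemma ps_zero : (0 : Set X) = ∅ := rfl
lemma ps_neg (A : Set X) : -A = A := rfl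

/-- The subring of finite-or-cofinite sets. -/
def cofinSubring (X : Type*) : Subring (Set X) where
  carrier := {A : Set X | A.Finite ∨ Aᶜ.Finite}
  one_mem' := Or.inr (by simp [ps_one])
  zero_mem' := Or.inl (by simp [ps_zero])
  neg_mem' := fun h => by rwa [ps_neg]
  mul_mem' := by
    rintro A B (hA | hA) hB
    · exact Or.inl ((hA.inter_of_left B).subset (by rw [ps_mul]))
    · rcases hB with hB | hB
      · exact Or.inl ((hB.inter_of_right A).subset (by rw [ps_mul]))
      · refine Or.inr ?_
        rw [ps_mul, Set.compl_inter]
        exact hA.union hB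
  add_mem' := by
    rintro A B (hA | hA) (hB | hB) <;> rw [ps_add]
    · exact Or.inl ((hA.union hB).subset symmDiff_le_sup)
    · refine Or.inr ((hA.union hB).subset ?_)
      intro x hx
      simp only [Set.mem_compl_iff, Set.mem_symmDiff] at hx
      simp only [Set.mem_union, Set.mem_compl_iff]
      tauto
    · refine Or.inr ((hA.union hB).subset ?_)
      intro x hx
      simp only [Set.mem_compl_iff, Set.mem_symmDiff] at hx
      simp only [Set.mem_union, Set.mem_compl_iff]
      tauto
    · refine Or.inl ((hA.union hB).subset ?_)
      intro x hx
      simp only [Set.mem_symmDiff] at hx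
      simp only [Set.mem_union, Set.mem_compl_iff]
      tauto

lemma coe_add_S (A B : cofinSubring X) :
    ((A + B : cofinSubring X) : Set X) = symmDiff (A : Set X) (B : Set X) := rfl
lemma coe_mul_S (A B : cofinSubring X) :
    ((A * B : cofinSubring X) : Set X) = (A : Set X) ∩ (B : Set X) := rfl
lemma coe_one_S : ((1 : cofinSubring X) : Set X) = Set.univ := rfl
lemma coe_zero_S : ((0 : cofinSubring X) : Set X) = ∅ := rfl

lemma S_add_self (A : cofinSubring X) : A + A = 0 := by
  apply Subtype.ext
  rw [coe_add_S, coe_zero_S, symmDiff_self]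
  rfl

/-- The ideal of finite sets. -/
def finIdeal (X : Type*) : Ideal (cofinSubring X) where
  carrier := {A : cofinSubring X | (A : Set X).Finite}
  zero_mem' := by
    show ((0 : cofinSubring X) : Set X).Finite
    rw [coe_zero_S]; exact Set.finite_empty
  add_mem' := by
    intro a b ha hb
    exact ((ha.union hb).subset (by rw [coe_add_S]; exact symmDiff_le_sup))
  smul_mem' := by
    intro c a ha
    simpa [smul_eq_mul, Set.mem_setOf_eq, coe_mul_S, ps_mul] using ha.inter_of_right _

/-- The ideal of sets not containing `x`. -/
def ptIdeal (x : X) : Ideal (cofinSubring X) where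
  carrier := {A : cofinSubring X | x ∉ (A : Set X)}
  zero_mem' := by
    show x ∉ ((0 : cofinSubring X) : Set X)
    rw [coe_zero_S]; simp
  add_mem' := by
    intro a b ha hb
    simp only [Set.mem_setOf_eq, coe_add_S, Set.mem_symmDiff]
    tauto
  smul_mem' := by
    intro c a ha
    simp only [smul_eq_mul, Set.mem_setOf_eq, coe_mul_S, Set.mem_inter_iff]
    tauto

lemma mem_finIdeal {A : cofinSubring X} : A ∈ finIdeal X ↔ (A : Set X).Finite := Iff.rfl
lemma mem_ptIdeal {x : X} {A : cofinSubring X} : A ∈ ptIdeal x ↔ x ∉ (A : Set X) := Iff.rfl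

/-- Maximality criterion in a ring of characteristic-2-like behaviour. -/
lemma isMaximal_of_crit {R : Type*} [CommRing R] (I : Ideal R)
    (hsq : ∀ a : R, a + a = 0) (h1 : (1 : R) ∉ I)
    (h : ∀ a : R, a ∈ I ∨ 1 + a ∈ I) : I.IsMaximal := by
  rw [Ideal.isMaximal_iff]
  refine ⟨h1, fun J x hIJ hxI hxJ => ?_⟩
  rcases h x with h' | h'
  · exact absurd h' hxI
  · have : x + (1 + x) ∈ J := J.add_mem hxJ (hIJ h')
    have e : x + (1 + x) = 1 := by
      rw [add_comm (1 : R) x, ← add_assoc, hsq, zero_add]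
    rwa [e] at this

variable [Infinite X]

lemma finIdeal_isMaximal : (finIdeal X).IsMaximal := by
  apply isMaximal_of_crit _ S_add_self
  · intro h
    rw [mem_finIdeal, coe_one_S] at h
    exact Set.infinite_univ h
  · intro a
    rcases a.2 with h | h
    · exact Or.inl h
    · refine Or.inr ?_
      rw [mem_finIdeal, coe_add_S, coe_one_S]
      refine h.subset ?_
      intro y hy
      rw [Set.mem_symmDiff] at hy
      rcases hy with ⟨_, h2⟩ | ⟨_, h2⟩
      · exact h2
      · exact absurd (Set.mem_univ y) h2

lemma ptIdeal_isMaximal (x : X) : (ptIdeal x).IsMaximal := by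
  apply isMaximal_of_crit _ S_add_self
  · intro h
    rw [mem_ptIdeal, coe_one_S] at h
    exact h (Set.mem_univ x)
  · intro a
    by_cases h : x ∈ (a : Set X)
    · refine Or.inr ?_
      rw [mem_ptIdeal, coe_add_S, coe_one_S, Set.mem_symmDiff]
      tauto
    · exact Or.inl h

/-- the singleton as an element of the subring -/
def sgl (x : X) : cofinSubring X := ⟨{x}, Or.inl (Set.finite_singleton x)⟩

lemma finIdeal_le_of_singletons {M : Ideal (cofinSubring X)}
    (h : ∀ x : X, sgl x ∈ M) : finIdeal X ≤ M := by
  intro A hA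
  rw [mem_finIdeal] at hA
  obtain ⟨A, hAS⟩ := A
  replace hA : A.Finite := hA
  revert hAS
  refine Set.Finite.induction_on (motive := fun s _ =>
      ∀ hs : s ∈ cofinSubring X, (⟨s, hs⟩ : cofinSubring X) ∈ M) A hA ?_ ?_
  · intro _
    exact M.zero_mem
  · intro a s ha hsfin ih hmem
    have hsS : s ∈ cofinSubring X := Or.inl hsfin
    have : (⟨insert a s, hmem⟩ : cofinSubring X) = sgl a + ⟨s, hsS⟩ := by
      apply Subtype.ext
      rw [coe_add_S]
      ext y
      simp only [Set.mem_insert_iff, Set.mem_symmDiff, sgl, Set.mem_singleton_iff]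
      constructor
      · rintro (rfl | hy)
        · exact Or.inl ⟨rfl, ha⟩
        · exact Or.inr ⟨hy, fun h => ha (h ▸ hy)⟩
      · rintro (⟨rfl, _⟩ | ⟨hy, _⟩)
        · exact Or.inl rfl
        · exact Or.inr hy
    rw [this]
    exact M.add_mem (h a) (ih hsS)

end Aux

/-- Let `X` be infinite and `S` the subring of `P(X)` of finite-or-cofinite subsets.
The maximal ideals of `S` are exactly `Fin(X)` and the ideals
`m_x ∩ S = {A ∈ S : x ∉ A}` for `x ∈ X`. -/
theorem stmt_19 (X : Type*) [Infinite X] :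
    ∃ S : Subring (Set X), (S : Set (Set X)) = {A : Set X | A.Finite ∨ Aᶜ.Finite} ∧
      ∀ M : Ideal S, M.IsMaximal ↔
        ((M : Set S) = {A : S | (A : Set X).Finite} ∨
          ∃ x : X, (M : Set S) = {A : S | x ∉ (A : Set X)}) := by
  refine ⟨cofinSubring X, rfl, fun M => ?_⟩
  constructor
  · intro hM
    by_cases h : ∀ x : X, sgl x ∈ M
    · left
      have : finIdeal X = M :=
        (finIdeal_isMaximal).eq_of_le hM.ne_top (finIdeal_le_of_singletons h)
      rw [← this]
      rfl
    · right
      push_neg at h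
      obtain ⟨x, hx⟩ := h
      refine ⟨x, ?_⟩
      have hle : M ≤ ptIdeal x := by
        intro A hA
        rw [mem_ptIdeal]
        intro hxA
        apply hx
        have : sgl x = A * sgl x := by
          apply Subtype.ext
          rw [coe_mul_S]
          ext y
          simp only [sgl, Set.mem_singleton_iff, Set.mem_inter_iff]
          constructor
          · rintro rfl; exact ⟨hxA, rfl⟩
          · rintro ⟨_, h⟩; exact h
        rw [this]
        exact M.mul_mem_right _ hA
      have : M = ptIdeal x := hM.eq_of_le (ptIdeal_isMaximal x).ne_top hle
      rw [this]
      rfl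
  · rintro (h | ⟨x, h⟩)
    · have : M = finIdeal X := SetLike.ext' h
      rw [this]
      exact finIdeal_isMaximal
    · have : M = ptIdeal x := SetLike.ext' h
      rw [this]
      exact ptIdeal_isMaximal x
end
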